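/- arXiv:2105.01204 — 2 statements merged into one kernel-verified Lean document; each statement's English description precedes it below -/
import Mathlib

section
/- Let h : ℝ → ℝ be differentiable on [0, ∞) and let α : ℝ → ℝ be an extended class K function (i.e., α is strictly monotone increasing and α(0) = 0). If h(0) ≥ 0 and h'(t) ≥ -α(h(t)) for all t ≥ 0, then h(t) ≥ 0 for all t ≥ 0. -/
/-- Scalar comparison lemma underlying forward invariance for Control Barrier
Functions: if `h` is differentiable on `[0, ∞)` with derivative `h'`, `α` is an
extended class `K` function (strictly increasing with `α 0 = 0`), `h 0 ≥ 0`, and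
`h' t ≥ -α (h t)` for all `t ≥ 0`, then `h t ≥ 0` for all `t ≥ 0`. -/
theorem cbf_comparison_classK
    (h h' α : ℝ → ℝ)
    (hα_mono : StrictMono α) (hα_zero : α 0 = 0)
    (hderiv : ∀ t ∈ Set.Ici (0 : ℝ), HasDerivWithinAt h (h' t) (Set.Ici 0) t)
    (h0 : 0 ≤ h 0)
    (hineq : ∀ t ≥ (0 : ℝ), h' t ≥ -α (h t)) :
    ∀ t ≥ (0 : ℝ), 0 ≤ h t := by
  intro t₁ ht₁
  by_contra hneg
  push_neg at hneg
  have hcont : ContinuousOn h (Set.Ici 0) := fun x hx => (hderiv x hx).continuousWithinAt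
  set S : Set ℝ := Set.Icc (0:ℝ) t₁ ∩ h ⁻¹' Set.Ici 0 with hS
  have hSsub : S ⊆ Set.Ici (0:ℝ) := fun x hx => hx.1.1
  have hSclosed : IsClosed S :=
    (hcont.mono (fun x hx => hx.1)).preimage_isClosed_of_isClosed isClosed_Icc isClosed_Ici
  have h0S : (0:ℝ) ∈ S := ⟨⟨le_refl 0, ht₁⟩, h0⟩
  have hSne : S.Nonempty := ⟨0, h0S⟩
  have hSbdd : BddAbove S := ⟨t₁, fun x hx => hx.1.2⟩
  set s := sSup S with hs_def
  have hsS : s ∈ S := hSclosed.csSup_mem hSne hSbdd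
  have hs0 : 0 ≤ s := hsS.1.1
  have hst₁ : s ≤ t₁ := hsS.1.2
  have hhs : (0:ℝ) ≤ h s := hsS.2
  have hs_lt : s < t₁ := lt_of_le_of_ne hst₁ (fun he => absurd hneg (not_lt.2 (he ▸ hhs)))
  have hxneg : ∀ x, s < x → x ≤ t₁ → h x < 0 := by
    intro x hsx hxt
    by_contra hge
    push_neg at hge
    exact absurd (le_csSup hSbdd ⟨⟨le_trans hs0 hsx.le, hxt⟩, hge⟩) (not_le.2 hsx)
  have hmono : MonotoneOn h (Set.Icc s t₁) := by
    apply monotoneOn_of_deriv_nonneg (convex_Icc s t₁)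
    · exact hcont.mono (fun x hx => le_trans hs0 hx.1)
    · intro x hx
      rw [interior_Icc] at hx
      have hx0 : 0 < x := lt_of_le_of_lt hs0 hx.1
      exact ((hderiv x hx0.le).hasDerivAt (Ici_mem_nhds hx0)).differentiableAt.differentiableWithinAt
    · intro x hx
      rw [interior_Icc] at hx
      have hx0 : 0 < x := lt_of_le_of_lt hs0 hx.1
      have hda := (hderiv x hx0.le).hasDerivAt (Ici_mem_nhds hx0)
      rw [hda.deriv]
      have h1 := hineq x hx0.le
      have hαneg : α (h x) < 0 := by
        have := hα_mono (hxneg x hx.1 hx.2.le)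
        rwa [hα_zero] at this
      linarith
  have := hmono ⟨le_refl s, hst₁⟩ ⟨hs_lt.le, le_refl t₁⟩ hst₁
  linarith
end

section
/- Let h : ℝⁿ → ℝ be continuously differentiable, let α : ℝ → ℝ be an extended class K function, and let x : [0, ∞) → ℝⁿ be a differentiable curve solving ẋ(t) = f(x(t)) + g(x(t))·u(t), where f : ℝⁿ → ℝⁿ, g : ℝⁿ → ℝⁿˣᵐ and u : [0, ∞) → ℝᵐ. If h(x(0)) ≥ 0 and for every t ≥ 0 the control barrier inequality ⟨∇h(x(t)), f(x(t)) + g(x(t))·u(t)⟩ + α(h(x(t))) ≥ 0 holds, then h(x(t)) ≥ 0 for all t ≥ 0; that is, the trajectory remains in the safe set C = {x ∈ ℝⁿ : h(x) ≥ 0}. -/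
/-! Along the trajectory, `h ∘ x` has derivative `⟪∇h(x t), ẋ t⟫ ≥ -α (h (x t))`, which is
positive wherever `h (x t) < 0`; hence `h ∘ x`, starting nonnegative, can never drop below
any negative level. -/

open Set

theorem HasGradientAt.comp_hasDerivWithinAt {F : Type*} [NormedAddCommGroup F]
    [InnerProductSpace ℝ F] [CompleteSpace F] {h : F → ℝ} {h' : F} {x : ℝ → F} {v : F}
    {s : Set ℝ} {t : ℝ} (hh : HasGradientAt h h' (x t)) (hx : HasDerivWithinAt x v s t) :
    HasDerivWithinAt (h ∘ x) (inner ℝ h' v) s t := by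
  simpa using hh.hasFDerivAt.comp_hasDerivWithinAt t hx

theorem nonneg_of_hasDerivWithinAt_of_neg_imp_deriv_pos {φ φ' : ℝ → ℝ} {a : ℝ}
    (hφ : ∀ t ∈ Ici a, HasDerivWithinAt φ (φ' t) (Ici a) t) (ha : 0 ≤ φ a)
    (hpos : ∀ t ∈ Ici a, φ t < 0 → 0 < φ' t) : ∀ t ∈ Ici a, 0 ≤ φ t := by
  intro t ht
  have hcont : ContinuousOn φ (Icc a t) := fun s hs =>
    (hφ s hs.1).continuousWithinAt.mono Icc_subset_Ici_self
  have hφ_right : ∀ s ∈ Ico a t, HasDerivWithinAt φ (φ' s) (Ici s) s := fun s hs =>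
    (hφ s hs.1).mono (Ici_subset_Ici.2 hs.1)
  -- `φ` can never reach a level `-ε < 0` from above, since its derivative is positive there.
  refine le_of_forall_sub_le fun ε hε => ?_
  exact image_le_of_deriv_right_lt_deriv_boundary' continuousOn_const
    (fun s _ => hasDerivWithinAt_const s _ (0 - ε)) (by linarith) hcont hφ_right
    (fun s hs hs_eq => hpos s hs.1 (by linarith)) ⟨ht, le_rfl⟩

/-- Forward invariance of the safe set `C = {x | h x ≥ 0}` under the Control
Barrier Function condition: if `h` is continuously differentiable, `α` is an
extended class `K` function, `x` solves `ẋ = f(x) + g(x) u` on `[0, ∞)`,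
`h (x 0) ≥ 0`, and the CBF inequality
`⟪∇h(x t), f(x t) + g(x t) • u t⟫ + α (h (x t)) ≥ 0` holds for all `t ≥ 0`,
then `h (x t) ≥ 0` for all `t ≥ 0`. -/
theorem cbf_forward_invariance
    (n m : ℕ)
    (h : EuclideanSpace ℝ (Fin n) → ℝ)
    (hh : ContDiff ℝ 1 h)
    (α : ℝ → ℝ) (hα_mono : StrictMono α) (hα_zero : α 0 = 0)
    (f : EuclideanSpace ℝ (Fin n) → EuclideanSpace ℝ (Fin n))
    (g : EuclideanSpace ℝ (Fin n) → Matrix (Fin n) (Fin m) ℝ)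
    (u : ℝ → (Fin m → ℝ))
    (x : ℝ → EuclideanSpace ℝ (Fin n))
    (hsol : ∀ t ∈ Set.Ici (0 : ℝ),
      HasDerivWithinAt x
        (f (x t) + (WithLp.equiv 2 (Fin n → ℝ)).symm ((g (x t)).mulVec (u t)))
        (Set.Ici 0) t)
    (h0 : 0 ≤ h (x 0))
    (hcbf : ∀ t ≥ (0 : ℝ),
      0 ≤ inner ℝ (gradient h (x t))
            (f (x t) + (WithLp.equiv 2 (Fin n → ℝ)).symm ((g (x t)).mulVec (u t)))
          + α (h (x t))) :
    ∀ t ≥ (0 : ℝ), x t ∈ {y : EuclideanSpace ℝ (Fin n) | 0 ≤ h y} := by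
  intro t ht
  refine nonneg_of_hasDerivWithinAt_of_neg_imp_deriv_pos (φ := h ∘ x)
    (fun s hs => (hh.differentiable one_ne_zero (x s)).hasGradientAt.comp_hasDerivWithinAt
      (hsol s hs))
    h0 (fun s hs hneg => ?_) t ht
  have hα_neg : α (h (x s)) < 0 := hα_zero ▸ hα_mono hneg
  linarith [hcbf s hs]
end
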